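/- In a reset system, every reachable node has its initial process as its checkpoint: if R is reachable from an initial reset system and R = n[P](M)(t){Q} ∥ R', then Q = Γ(n), where Γ(n) is the initial process of node n. -/

import Mathlib

/-- Time values: `none` is the wildcard `*`, `some t` a natural time. -/
abbrev TVal := Option ℕ

/-- The synchronization partial function `⊔`, returning `none` when undefined. -/
def sync : TVal → TVal → Option TVal
  | none, x => some x
  | some t, none => some (some t)
  | some t₁, some t₂ => if t₁ = t₂ then some (some t₁) else none

/-- Node identifiers. -/
abbrev NId := ℕ

/-- Values: atoms, node identifiers, variables. -/
inductive Val : Type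
  | atom (a : ℕ)
  | nid (n : NId)
  | var (x : ℕ)
deriving DecidableEq

/-- Messages are tuples (lists) of values. -/
abbrev Msg := List Val

/-- Pattern elements: variables or atoms. -/
inductive Pat : Type
  | var (x : ℕ)
  | atom (a : ℕ)
deriving DecidableEq

/-- Substitutions, as finite association lists. -/
abbrev Subst := List (ℕ × Val)

/-- Matching of a single pattern element against a value. -/
inductive MatchE : Pat → Val → Subst → Prop
  | varA (x a : ℕ) : MatchE (.var x) (.atom a) [(x, .atom a)]
  | varN (x : ℕ) (n : NId) : MatchE (.var x) (.nid n) [(x, .nid n)]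
  | atom (a : ℕ) : MatchE (.atom a) (.atom a) []

/-- Matching of a pattern tuple against a message tuple. -/
inductive MatchT : List Pat → List Val → Subst → Prop
  | nil : MatchT [] [] []
  | cons {p v σ₁ ps vs σ₂} :
      MatchE p v σ₁ → MatchT ps vs σ₂ → MatchT (p :: ps) (v :: vs) (σ₁ ++ σ₂)

/-- Matching of a pattern against a mailbox (list of messages): rules MboxH and MboxT. -/
inductive MatchMbox : List Pat → List Msg → Subst → Prop
  | head {p m M σ} : MatchT p m σ → MatchMbox p (m :: M) σ
  | tail {p m M σ} : (∀ σ', ¬ MatchT p m σ') → MatchMbox p M σ → MatchMbox p (m :: M) σ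

/- Processes (recursion in de Bruijn style). -/
mutual
inductive Proc : Type
  | send (br : Branches)                      -- choice of sends ⊕ !nᵢ mᵢ.Pᵢ
  | recv (br : RBranches) (timeout : Proc)    -- ?{pᵢ.Pᵢ} after P
  | sleep (P : Proc)
  | save (P : Proc)
  | fix (P : Proc)                            -- μt.P
  | rvar (k : ℕ)                              -- recursion variable t
  | nil
inductive Branches : Type
  | nil
  | cons (n : NId) (m : Msg) (P : Proc) (rest : Branches)
inductive RBranches : Type
  | nil
  | cons (p : List Pat) (P : Proc) (rest : RBranches)
end

/-- Membership in send branches. -/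
inductive BrMem : NId → Msg → Proc → Branches → Prop
  | head {n m P rest} : BrMem n m P (.cons n m P rest)
  | tail {n m P n' m' P' rest} : BrMem n m P rest → BrMem n m P (.cons n' m' P' rest)

/-- Membership in receive branches. -/
inductive RBrMem : List Pat → Proc → RBranches → Prop
  | head {p P rest} : RBrMem p P (.cons p P rest)
  | tail {p P p' P' rest} : RBrMem p P rest → RBrMem p P (.cons p' P' rest)

/- Substitution of a process `Q` for the recursion variable with index `k`. -/
mutual
def substRec (k : ℕ) (Q : Proc) : Proc → Proc
  | .send br => .send (substRecB k Q br)
  | .recv br T => .recv (substRecR k Q br) (substRec k Q T)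
  | .sleep P => .sleep (substRec k Q P)
  | .save P => .save (substRec k Q P)
  | .fix P => .fix (substRec (k + 1) Q P)
  | .rvar j => if j = k then Q else .rvar j
  | .nil => .nil
def substRecB (k : ℕ) (Q : Proc) : Branches → Branches
  | .nil => .nil
  | .cons n m P rest => .cons n m (substRec k Q P) (substRecB k Q rest)
def substRecR (k : ℕ) (Q : Proc) : RBranches → RBranches
  | .nil => .nil
  | .cons p P rest => .cons p (substRec k Q P) (substRecR k Q rest)
end

/-- Unfolding of μt.P : P[μt.P / t]. -/
def unfold (P : Proc) : Proc := substRec 0 (.fix P) P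

def lookupS (σ : Subst) (x : ℕ) : Option Val := (σ.find? (fun e => e.1 == x)).map (·.2)

def applyV (σ : Subst) : Val → Val
  | .var x => (lookupS σ x).getD (.var x)
  | v => v

def applyM (σ : Subst) (m : Msg) : Msg := m.map (applyV σ)

/- Application of a substitution to a process. -/
mutual
def applyP (σ : Subst) : Proc → Proc
  | .send br => .send (applyPB σ br)
  | .recv br T => .recv (applyPR σ br) (applyP σ T)
  | .sleep P => .sleep (applyP σ P)
  | .save P => .save (applyP σ P)
  | .fix P => .fix (applyP σ P)
  | .rvar k => .rvar k
  | .nil => .nil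
def applyPB (σ : Subst) : Branches → Branches
  | .nil => .nil
  | .cons n m P rest => .cons n (applyM σ m) (applyP σ P) (applyPB σ rest)
def applyPR (σ : Subst) : RBranches → RBranches
  | .nil => .nil
  | .cons p P rest => .cons p (applyP σ P) (applyPR σ rest)
end

/- The non-instantaneousness predicate `ninst`. -/
mutual
def ninst : Proc → Bool
  | .send br => ninstB br
  | .recv br _ => ninstR br
  | .sleep _ => true
  | .save P => ninst P
  | .fix P => ninst P
  | .rvar _ => false
  | .nil => false
def ninstB : Branches → Bool
  | .nil => true
  | .cons _ _ P rest => ninst P && ninstB rest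
def ninstR : RBranches → Bool
  | .nil => true
  | .cons _ P rest => ninst P && ninstR rest
end

/-- Systems. -/
inductive System : Type
  | node (n : NId) (P : Proc) (M : List Msg) (t : ℕ) (Q : Proc)  -- n[P](M)(t){Q}
  | crashed (n : NId) (t : ℕ) (Q : Proc)                         -- n[↓](∅)(t){Q}
  | fmsg (n₁ n₂ : NId) (m : Msg) (t : ℕ)                         -- floating message
  | lmsg (u : ℕ) (n₁ n₂ : NId) (m : Msg) (t : ℕ)                 -- latent message
  | empty
  | par (R₁ R₂ : System)

/-- Health state of a node or link. -/
inductive Health : Type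
  | up
  | down
  | slow

/-- A curse Δ assigns a health state to each node and link at each time. -/
structure Curse : Type where
  nodeH : ℕ → NId → Health
  linkH : ℕ → NId → NId → Health

/-- The time of a system (a partial function; `some none` is the wildcard `*`). -/
def timeSys : System → Option TVal
  | .node _ _ _ t _ => some (some t)
  | .crashed _ t _ => some (some t)
  | .fmsg _ _ _ t => some (some t)
  | .lmsg _ _ _ _ t => some (some t)
  | .empty => some none
  | .par a b => (timeSys a).bind fun x => (timeSys b).bind fun y => sync x y

/-- Time coherence: the time of the system is defined. -/
def TimeCoherent (R : System) : Prop := (timeSys R).isSome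

/-- Structural equivalence of systems. -/
inductive SEq : System → System → Prop
  | refl (R) : SEq R R
  | symm {R₁ R₂} : SEq R₁ R₂ → SEq R₂ R₁
  | trans {R₁ R₂ R₃} : SEq R₁ R₂ → SEq R₂ R₃ → SEq R₁ R₃
  | parComm (a b) : SEq (.par a b) (.par b a)
  | parAssoc (a b c) : SEq (.par (.par a b) c) (.par a (.par b c))
  | parEmpty (a) : SEq (.par a .empty) a
  | lmsgZero (n₁ n₂ m t) : SEq (.lmsg 0 n₁ n₂ m t) (.fmsg n₁ n₂ m t)
  | parCong {a a' b b'} : SEq a a' → SEq b b' → SEq (.par a b) (.par a' b')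

/-- Network latency constant L. -/
def netLatency : ℕ := 1

/-- Communication actions ↪ (instantaneous actions, including failure actions). -/
inductive Comm (Δ : Curse) : System → System → Prop
  | snd {n br M t Q nj mj Pj} :
      Δ.nodeH t n = .up → BrMem nj mj Pj br →
      Comm Δ (.node n (.send br) M t Q)
             (.par (.node n Pj M t Q) (.lmsg netLatency n nj mj t))
  | sched {n₁ n₂ m t P M Q} :
      Δ.nodeH t n₁ = .up → Δ.linkH t n₂ n₁ = .up →
      Comm Δ (.par (.fmsg n₂ n₁ m t) (.node n₁ P M t Q)) (.node n₁ P (M ++ [m]) t Q)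
  | rcv {n br T M₁ m M₂ t Q p Pj σ} :
      Δ.nodeH t n = .up →
      RBrMem p Pj br → MatchT p m σ →
      (∀ p' P', RBrMem p' P' br → ∀ m' ∈ M₁, ∀ σ', ¬ MatchT p' m' σ') →
      Comm Δ (.node n (.recv br T) (M₁ ++ m :: M₂) t Q)
             (.node n (applyP σ Pj) (M₁ ++ M₂) t Q)
  | checkpoint {n P M t Q} :
      Comm Δ (.node n (.save P) M t Q) (.node n P M t P)
  | msgLoss {u n₁ n₂ m t} :
      Δ.linkH t n₁ n₂ = .down →
      Comm Δ (.lmsg u n₁ n₂ m t) .empty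
  | down {n P M t Q} :
      Δ.nodeH t n = .down →
      Comm Δ (.node n P M t Q) (.crashed n t Q)
  | up {n t Q} :
      Δ.nodeH t n = .up →
      Comm Δ (.crashed n t Q) (.node n Q [] t Q)
  | recur {n P M t Q P' M' t'} :
      Δ.nodeH t n = .up →
      Comm Δ (.node n (unfold P) M t Q) (.node n P' M' t' Q) →
      Comm Δ (.node n (.fix P) M t Q) (.node n P' M' t' Q)
  | parCom {R₁ R₁' R₂} :
      Comm Δ R₁ R₁' → Comm Δ (.par R₁ R₂) (.par R₁' R₂)
  | str {R₁ R₁' R₂ R₂'} :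
      SEq R₁ R₁' → Comm Δ R₁' R₂' → SEq R₂' R₂ → Comm Δ R₁ R₂

/-- Time actions ⇝. -/
inductive TimeStep (Δ : Curse) : System → System → Prop
  | sleep {n P M t Q} :
      Δ.nodeH t n = .up →
      TimeStep Δ (.node n (.sleep P) M t Q) (.node n P M (t + 1) Q)
  | latency {u n₁ n₂ m t} :
      Δ.linkH t n₁ n₂ = .up →
      TimeStep Δ (.lmsg u n₁ n₂ m t) (.lmsg (u - 1) n₁ n₂ m (t + 1))
  | timeout {n br T M t Q} :
      Δ.nodeH t n = .up →
      (∀ p P', RBrMem p P' br → ∀ m ∈ M, ∀ σ, ¬ MatchT p m σ) →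
      TimeStep Δ (.node n (.recv br T) M t Q) (.node n T M (t + 1) Q)
  | idle {n M t Q} :
      Δ.nodeH t n = .up →
      TimeStep Δ (.node n .nil M t Q) (.node n .nil M (t + 1) Q)
  | nLate {n P M t Q} :
      Δ.nodeH t n = .slow →
      TimeStep Δ (.node n P M t Q) (.node n P M (t + 1) Q)
  | msgLate {u n₁ n₂ m t} :
      Δ.linkH t n₁ n₂ = .slow →
      TimeStep Δ (.lmsg u n₁ n₂ m t) (.lmsg u n₁ n₂ m (t + 1))
  | ndLate {n t Q} :
      Δ.nodeH t n = .down →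
      TimeStep Δ (.crashed n t Q) (.crashed n (t + 1) Q)
  | empty : TimeStep Δ .empty .empty
  | recur {n P M t Q P' M' t'} :
      Δ.nodeH t n = .up →
      TimeStep Δ (.node n (unfold P) M t Q) (.node n P' M' t' Q) →
      TimeStep Δ (.node n (.fix P) M t Q) (.node n P' M' t' Q)
  | parTime {R₁ R₁' R₂ R₂'} :
      TimeStep Δ R₁ R₁' → TimeStep Δ R₂ R₂' →
      (∀ R', ¬ Comm Δ (.par R₁ R₂) R') →
      TimeStep Δ (.par R₁ R₂) (.par R₁' R₂')
  | str {R₁ R₁' R₂ R₂'} :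
      SEq R₁ R₁' → TimeStep Δ R₁' R₂' → SEq R₂' R₂ → TimeStep Δ R₁ R₂

/-- Reduction: either a communication action or a time action. -/
def Step (Δ : Curse) (R R' : System) : Prop := Comm Δ R R' ∨ TimeStep Δ R R'

/- Save-freeness of processes (reset systems are generated without `save`). -/
mutual
def hasSave : Proc → Bool
  | .send br => hasSaveB br
  | .recv br T => hasSaveR br || hasSave T
  | .sleep P => hasSave P
  | .save _ => true
  | .fix P => hasSave P
  | .rvar _ => false
  | .nil => false
def hasSaveB : Branches → Bool
  | .nil => false
  | .cons _ _ P rest => hasSave P || hasSaveB rest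
def hasSaveR : RBranches → Bool
  | .nil => false
  | .cons _ P rest => hasSave P || hasSaveR rest
end

/-- Initial reset systems: parallel compositions of nodes n[Γ(n)](∅)(0){Γ(n)}
(checkpoint map Σ coincides with the initial-process map Γ). -/
inductive InitPar (Γ Sg : NId → Proc) : System → Prop
  | node (n : NId) : InitPar Γ Sg (.node n (Γ n) [] 0 (Sg n))
  | par {a b} : InitPar Γ Sg a → InitPar Γ Sg b → InitPar Γ Sg (.par a b)


/-!
A reset system never executes `save`, and `save` is the only construct that rewrites a
checkpoint. So the invariant "every running process is save-free and every checkpoint is the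
initial process" holds initially and is preserved by every rule: running processes only ever
move to subterms, to unfoldings or to substitution instances of save-free terms, which stay
save-free, and a node that comes back up restarts from its checkpoint `Γ n`, which is
save-free by assumption.
-/

mutual
theorem hasSave_substRec (k : ℕ) {Q : Proc} (hQ : hasSave Q = false) :
    ∀ {P : Proc}, hasSave P = false → hasSave (substRec k Q P) = false
  | .send br, h => hasSaveB_substRecB k hQ (br := br) h
  | .recv br T, h => by
      simp only [hasSave, substRec, Bool.or_eq_false_iff] at h ⊢
      exact ⟨hasSaveR_substRecR k hQ h.1, hasSave_substRec k hQ h.2⟩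
  | .sleep P, h => hasSave_substRec k hQ (P := P) h
  | .save _, h => by simp [hasSave] at h
  | .fix P, h => hasSave_substRec (k + 1) hQ (P := P) h
  | .rvar j, _ => by by_cases hj : j = k <;> simp [substRec, hj, hQ, hasSave]
  | .nil, _ => rfl
theorem hasSaveB_substRecB (k : ℕ) {Q : Proc} (hQ : hasSave Q = false) :
    ∀ {br : Branches}, hasSaveB br = false → hasSaveB (substRecB k Q br) = false
  | .nil, _ => rfl
  | .cons _ _ P rest, h => by
      simp only [hasSaveB, substRecB, Bool.or_eq_false_iff] at h ⊢
      exact ⟨hasSave_substRec k hQ h.1, hasSaveB_substRecB k hQ h.2⟩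
theorem hasSaveR_substRecR (k : ℕ) {Q : Proc} (hQ : hasSave Q = false) :
    ∀ {br : RBranches}, hasSaveR br = false → hasSaveR (substRecR k Q br) = false
  | .nil, _ => rfl
  | .cons _ P rest, h => by
      simp only [hasSaveR, substRecR, Bool.or_eq_false_iff] at h ⊢
      exact ⟨hasSave_substRec k hQ h.1, hasSaveR_substRecR k hQ h.2⟩
end

theorem hasSave_unfold {P : Proc} (h : hasSave P = false) : hasSave (unfold P) = false :=
  hasSave_substRec 0 (Q := .fix P) h h

mutual
theorem hasSave_applyP (σ : Subst) :
    ∀ {P : Proc}, hasSave P = false → hasSave (applyP σ P) = false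
  | .send br, h => hasSaveB_applyPB σ (br := br) h
  | .recv br T, h => by
      simp only [hasSave, applyP, Bool.or_eq_false_iff] at h ⊢
      exact ⟨hasSaveR_applyPR σ h.1, hasSave_applyP σ h.2⟩
  | .sleep P, h => hasSave_applyP σ (P := P) h
  | .save _, h => by simp [hasSave] at h
  | .fix P, h => hasSave_applyP σ (P := P) h
  | .rvar _, _ => rfl
  | .nil, _ => rfl
theorem hasSaveB_applyPB (σ : Subst) :
    ∀ {br : Branches}, hasSaveB br = false → hasSaveB (applyPB σ br) = false
  | .nil, _ => rfl
  | .cons _ _ P rest, h => by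
      simp only [hasSaveB, applyPB, Bool.or_eq_false_iff] at h ⊢
      exact ⟨hasSave_applyP σ h.1, hasSaveB_applyPB σ h.2⟩
theorem hasSaveR_applyPR (σ : Subst) :
    ∀ {br : RBranches}, hasSaveR br = false → hasSaveR (applyPR σ br) = false
  | .nil, _ => rfl
  | .cons _ P rest, h => by
      simp only [hasSaveR, applyPR, Bool.or_eq_false_iff] at h ⊢
      exact ⟨hasSave_applyP σ h.1, hasSaveR_applyPR σ h.2⟩
end

theorem BrMem.hasSave_eq_false {n m P br} (hb : BrMem n m P br) (h : hasSaveB br = false) :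
    hasSave P = false := by
  induction hb with
  | head => simp only [hasSaveB, Bool.or_eq_false_iff] at h; exact h.1
  | tail _ ih => simp only [hasSaveB, Bool.or_eq_false_iff] at h; exact ih h.2

theorem RBrMem.hasSave_eq_false {p P br} (hb : RBrMem p P br) (h : hasSaveR br = false) :
    hasSave P = false := by
  induction hb with
  | head => simp only [hasSaveR, Bool.or_eq_false_iff] at h; exact h.1
  | tail _ ih => simp only [hasSaveR, Bool.or_eq_false_iff] at h; exact ih h.2

def ResetInv (Γ : NId → Proc) : System → Prop
  | .node n P _ _ Q => hasSave P = false ∧ Q = Γ n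
  | .crashed n _ Q => Q = Γ n
  | .par a b => ResetInv Γ a ∧ ResetInv Γ b
  | _ => True

section ResetInv

variable {Γ : NId → Proc} {Δ : Curse} {R R' : System}

theorem SEq.resetInv_iff (h : SEq R R') : ResetInv Γ R ↔ ResetInv Γ R' := by
  induction h with
  | refl => rfl
  | symm _ ih => exact ih.symm
  | trans _ _ ih₁ ih₂ => exact ih₁.trans ih₂
  | parComm | parAssoc | parEmpty => simp only [ResetInv]; tauto
  | lmsgZero => exact Iff.rfl
  | parCong _ _ ih₁ ih₂ => exact and_congr ih₁ ih₂

theorem Comm.resetInv (hΓ : ∀ n, hasSave (Γ n) = false) (h : Comm Δ R R')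
    (hI : ResetInv Γ R) : ResetInv Γ R' := by
  induction h with
  | snd _ hb =>
      obtain ⟨hP, hQ⟩ := hI
      exact ⟨⟨hb.hasSave_eq_false hP, hQ⟩, trivial⟩
  | sched => exact hI.2
  | rcv _ hb _ _ =>
      obtain ⟨hP, hQ⟩ := hI
      simp only [hasSave, Bool.or_eq_false_iff] at hP
      exact ⟨hasSave_applyP _ (hb.hasSave_eq_false hP.1), hQ⟩
  | checkpoint => simp [ResetInv, hasSave] at hI
  | msgLoss => trivial
  | down => exact hI.2
  | up => exact ⟨hI ▸ hΓ _, hI⟩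
  | recur _ _ ih => exact ih ⟨hasSave_unfold hI.1, hI.2⟩
  | parCom _ ih => exact ⟨ih hI.1, hI.2⟩
  | str hs₁ _ hs₂ ih => exact hs₂.resetInv_iff.mp (ih (hs₁.resetInv_iff.mp hI))

theorem TimeStep.resetInv (h : TimeStep Δ R R') (hI : ResetInv Γ R) : ResetInv Γ R' := by
  induction h with
  | sleep | idle | nLate | ndLate => exact hI
  | latency | msgLate | empty => trivial
  | timeout =>
      simp only [ResetInv, hasSave, Bool.or_eq_false_iff] at hI ⊢
      exact ⟨hI.1.2, hI.2⟩
  | recur _ _ ih => exact ih ⟨hasSave_unfold hI.1, hI.2⟩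
  | parTime _ _ _ ih₁ ih₂ => exact ⟨ih₁ hI.1, ih₂ hI.2⟩
  | str hs₁ _ hs₂ ih => exact hs₂.resetInv_iff.mp (ih (hs₁.resetInv_iff.mp hI))

theorem InitPar.resetInv (hΓ : ∀ n, hasSave (Γ n) = false) (h : InitPar Γ Γ R) :
    ResetInv Γ R := by
  induction h with
  | node n => exact ⟨hΓ n, rfl⟩
  | par _ _ ih₁ ih₂ => exact ⟨ih₁, ih₂⟩

theorem resetInv_of_reachable (hΓ : ∀ n, hasSave (Γ n) = false)
    (hr : Relation.ReflTransGen (Step Δ) R R') (hI : ResetInv Γ R) : ResetInv Γ R' := by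
  induction hr with
  | refl => exact hI
  | tail _ hstep ih => exact hstep.elim (·.resetInv hΓ ih) (·.resetInv ih)

end ResetInv

/-- in a reset system, every reachable node has its initial process
as its checkpoint. -/
theorem reset_checkpoint {Γ : NId → Proc} (hns : ∀ n, hasSave (Γ n) = false)
    {R₀ R : System} {Δ : Curse} (h0 : InitPar Γ Γ R₀)
    (hr : Relation.ReflTransGen (Step Δ) R₀ R)
    {n : NId} {P : Proc} {M : List Msg} {t : ℕ} {Q : Proc} {R' : System}
    (hsh : SEq R (.par (.node n P M t Q) R')) : Q = Γ n := by
  have hR : ResetInv Γ R := resetInv_of_reachable hns hr (h0.resetInv hns)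
  exact (hsh.resetInv_iff.mp hR).1.2
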